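/- arXiv:1612.08373 — 3 statements merged into one kernel-verified Lean document; each statement's English description precedes it below -/
import Mathlib

section
/- The set S* = {(x,a)* : x ∈ Z^n, a ∈ O_{n̄}, π_e(x) ∈ [-π_e(l(a)), 0)} of dual faces near the contracting space is invariant under the dual substitution E*_{n̄}(σ): every dual face occurring in the image E*_{n̄}(σ)(S*) lies in S*. -/
open Matrix

/-- Abelianization `l(a) = Σ_{i ∈ a} e_i` of a wedge (set of letters) `a`. -/
def wedgeAbel (n : ℕ) (a : Finset (Fin n)) : Fin n → ℝ :=
  fun i => if i ∈ a then 1 else 0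

/-- The set `S* = {(x,a) : x ∈ ℤⁿ, a ∈ O_{n̄}, π_e(x) ∈ [-π_e(l(a)), 0)}`
of dual faces near the contracting space is invariant under the dual substitution
`E*_{n̄}(σ)`: if `(x,a) ∈ S*` and `(y,b)` occurs in the image of `(x,a)`, i.e.
`σ(b) = p·a·s` letterwise (so `M_σ l(b) = l(p) + l(a) + l(s)`) and
`y = M_σ⁻¹(x - l(p))`, then `(y,b) ∈ S*`. -/
theorem stmt4 (n d : ℕ) (hdn : d ≤ n) (M : Matrix (Fin n) (Fin n) ℝ)
    (hM : IsUnit M.det)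
    (v : Fin n → ℝ) (β : ℝ) (hβ : 0 < β)
    (hv : M.transpose.mulVec v = β • v)
    (S : Set ((Fin n → ℤ) × Finset (Fin n)))
    (hS : S = {F | -(v ⬝ᵥ wedgeAbel n F.2) ≤ v ⬝ᵥ (fun i => (F.1 i : ℝ)) ∧
      v ⬝ᵥ (fun i => (F.1 i : ℝ)) < 0})
    (x y : Fin n → ℤ) (a b : Finset (Fin n))
    (hacard : a.card = n - d + 1) (hbcard : b.card = n - d + 1)
    (p s : Fin n → ℝ)
    (hp : 0 ≤ v ⬝ᵥ p) (hs : 0 ≤ v ⬝ᵥ s)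
    (hdec : M.mulVec (wedgeAbel n b) = p + wedgeAbel n a + s)
    (hy : M.mulVec (fun i => (y i : ℝ)) = (fun i => (x i : ℝ)) - p)
    (hx : (x, a) ∈ S) :
    (y, b) ∈ S := by
  subst hS
  obtain ⟨h1, h2⟩ := hx
  simp only [Set.mem_setOf_eq] at h1 h2 ⊢
  have key : ∀ w : Fin n → ℝ, v ⬝ᵥ M.mulVec w = β * (v ⬝ᵥ w) := by
    intro w
    rw [Matrix.dotProduct_mulVec, ← Matrix.mulVec_transpose, hv, smul_dotProduct,
      smul_eq_mul]
  have hxv : v ⬝ᵥ (fun i => (x i : ℝ)) = β * (v ⬝ᵥ fun i => (y i : ℝ)) + v ⬝ᵥ p := by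
    have := key (fun i => (y i : ℝ))
    rw [hy] at this
    rw [dotProduct_sub] at this
    linarith
  have hlb : β * (v ⬝ᵥ wedgeAbel n b) = v ⬝ᵥ p + v ⬝ᵥ wedgeAbel n a + v ⬝ᵥ s := by
    have := key (wedgeAbel n b)
    rw [hdec, dotProduct_add, dotProduct_add] at this
    linarith
  constructor
  · nlinarith
  · nlinarith
end

section
/- In the expansion of the (d-1)-dimensional volume of projected faces, the vector V = (det(u_1, u_{d+1},...,u_n, e_{a_1},...,e_{a_{d-1}}))_{a ∈ O_{d-1}} satisfies (M_{d-1})^T V = β V, where (M_{d-1})_{b,a} = (-1)^{Σa_i + Σb_i}(∧^{n-d+1} M_σ^T)_{b*,a*} and u_1, u_{d+1},...,u_n are eigenvectors of M_σ for eigenvalues β, ζ_{d+1},...,ζ_n with β·ζ_{d+1}···ζ_n = β (i.e., ∏ζ_i = 1). -/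
/-!
Write `U` for the `n × (n - d + 1)` matrix with columns `u_1, u_{d+1}, …, u_n`. Expanding `V_A`
along its unit columns gives `V_A = ε_A · det U[Aᶜ, ·]` for a sign `ε_A`. Since `M U = U D` with
`det D = β ∏ ζ_i = β`, we get `β V_A = ε_A · det (M[Aᶜ, ·] U)`, and the Cauchy–Binet formula
expands this into `Σ_B ε_A ε_B det M[Aᶜ, Bᶜ] · V_B`. Finally `ε_A ε_B = (-1)^(ΣA + ΣB)`: the
shuffle permutations of two sets differ by adjacent transpositions `a ↦ a + 1`, each of which
changes the sign and the sum of the set by one.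
-/

open Matrix

/-- The determinant `V_A = det(u_1, u_{d+1}, ..., u_n, e_{a_1}, ..., e_{a_{d-1}})`,
with columns arranged via a fixed bijection `e`. -/
def wedgeDet (n d : ℕ) (u1 : Fin n → ℂ) (us : Fin (n - d) → Fin n → ℂ)
    (e : (Option (Fin (n - d)) ⊕ Fin (d - 1)) ≃ Fin n)
    (A : {s : Finset (Fin n) // s.card = d - 1}) : ℂ :=
  Matrix.det (Matrix.of fun i j =>
    Sum.elim (fun o => Option.elim o (u1 i) (fun k => us k i))
      (fun jm => if i = (A.1.orderIsoOfFin A.2 jm : Fin n) then (1 : ℂ) else 0)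
      (e.symm j))

/-- The matrix `M_{d-1}` of the geometric dual map:
`(M_{d-1})_{B,A} = (-1)^{ΣA + ΣB} (∧^{n-d+1} Mᵀ)_{B*,A*}`, where the starred minor is
the determinant of the submatrix of `Mᵀ` with rows in `Bᶜ` and columns in `Aᶜ`. -/
def dualMatrix (n d : ℕ) (M : Matrix (Fin n) (Fin n) ℂ)
    (B A : {s : Finset (Fin n) // s.card = d - 1}) : ℂ :=
  if h : A.1ᶜ.card = n - d + 1 ∧ B.1ᶜ.card = n - d + 1 then
    (-1 : ℂ) ^ (∑ i ∈ A.1, (i : ℕ) + ∑ i ∈ B.1, (i : ℕ)) *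
      (M.transpose.submatrix
        (fun i : Fin (n - d + 1) => (B.1ᶜ.orderIsoOfFin h.2 i : Fin n))
        (fun j : Fin (n - d + 1) => (A.1ᶜ.orderIsoOfFin h.1 j : Fin n))).det
  else 0

open Finset Equiv

namespace Matrix

variable {R ι m : Type*} [CommRing R] [Fintype m] [DecidableEq m]

theorem det_submatrix_id_eq_zero_of_not_injective (P : Matrix m ι R) {f : m → ι}
    (hf : ¬f.Injective) : (P.submatrix id f).det = 0 := by
  obtain ⟨i, j, hij, hne⟩ := Function.not_injective_iff.1 hf
  rw [← det_transpose]
  exact det_zero_of_row_eq hne (funext fun k => by simp [hij])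

variable [Fintype ι]

theorem det_mul_eq_sum_prod_mul_det_submatrix [DecidableEq ι] (P : Matrix m ι R)
    (U : Matrix ι m R) :
    (P * U).det = ∑ f : m → ι, (∏ j, U (f j) j) * (P.submatrix id f).det := by
  calc (P * U).det
      = ∑ σ : Perm m, (Perm.sign σ : R) * ∏ j, ∑ l, P (σ j) l * U l j := by
        simp only [det_apply', mul_apply]
    _ = ∑ σ : Perm m, ∑ f : m → ι, (Perm.sign σ : R) * ∏ j, P (σ j) (f j) * U (f j) j := by
        simp only [prod_univ_sum, mul_sum, Fintype.piFinset_univ]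
    _ = ∑ f : m → ι, (∏ j, U (f j) j) * (P.submatrix id f).det := by
        rw [sum_comm]
        refine sum_congr rfl fun f _ => ?_
        simp only [det_apply', submatrix_apply, id, prod_mul_distrib, mul_sum]
        exact sum_congr rfl fun σ _ => by ring

/-- The **Cauchy–Binet formula**. -/
theorem det_mul_eq_sum_det_submatrix_mul_det_submatrix [LinearOrder ι] {k : ℕ}
    (P : Matrix (Fin k) ι R) (U : Matrix ι (Fin k) R) :
    (P * U).det = ∑ s : {s : Finset ι // #s = k},
      (P.submatrix id (s.1.orderEmbOfFin s.2)).det *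
        (U.submatrix (s.1.orderEmbOfFin s.2) id).det := by
  classical
  rw [det_mul_eq_sum_prod_mul_det_submatrix,
    ← sum_subset (filter_subset (fun f : Fin k → ι => f.Injective) univ) fun f _ hf => by
      rw [det_submatrix_id_eq_zero_of_not_injective P (by simpa using hf), mul_zero]]
  simp only [det_apply' (U.submatrix _ id), submatrix_apply, id, mul_sum, ← sum_product']
  -- an injective `f : Fin k → ι` is `orderEmbOfFin s ∘ σ` for a unique `s` and `σ`
  symm
  refine sum_bij (fun x _ => x.1.1.orderEmbOfFin x.1.2 ∘ x.2) (fun x _ => ?_) ?_ ?_ ?_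
  · simpa using (x.1.1.orderEmbOfFin x.1.2).injective.comp x.2.injective
  · rintro ⟨s, σ⟩ - ⟨t, τ⟩ - h
    have hst : s = t := by
      refine Subtype.ext (coe_inj.1 ?_)
      simpa only [EquivLike.range_comp, range_orderEmbOfFin] using congrArg Set.range h
    subst hst
    exact Prod.ext rfl (Equiv.ext fun j => (s.1.orderEmbOfFin s.2).injective (congrFun h j))
  · intro f hf
    have hinj : f.Injective := by simpa using hf
    have hcard : #(univ.image f) = k := by simp [card_image_of_injective _ hinj]
    have hmem (j) : f j ∈ univ.image f := mem_image_of_mem f (mem_univ j)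
    let σ : Perm (Fin k) := Equiv.ofBijective
      (fun j => ((univ.image f).orderIsoOfFin hcard).symm ⟨f j, hmem j⟩)
      (Finite.injective_iff_bijective.1 fun i j hij => hinj (by simpa using hij))
    refine ⟨(⟨_, hcard⟩, σ), mem_univ _, funext fun j => ?_⟩
    simp [σ, ← coe_orderIsoOfFin_apply]
  · rintro ⟨s, σ⟩ -
    change _ = _ * ((P.submatrix id _).submatrix id σ).det
    rw [det_permute']
    simp only [Function.comp_apply]
    ring

end Matrix

namespace Fin

variable {n : ℕ}

theorem strictMonoOn_swap_of_val_add_one_eq {a b : Fin n} (hab : (a : ℕ) + 1 = b)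
    {S : Set (Fin n)} (hS : ¬(a ∈ S ∧ b ∈ S)) : StrictMonoOn (swap a b) S :=
  fun x _ y _ _ => by grind [Fin.lt_def]

theorem isUpperSet_of_forall_val_add_one_eq {S : Set (Fin n)}
    (hS : ∀ a b : Fin n, (a : ℕ) + 1 = b → a ∈ S → b ∈ S) : IsUpperSet S := by
  intro x y hxy hx
  suffices ∀ g, ∀ y : Fin n, (y : ℕ) = x + g → y ∈ S from
    this _ y (Nat.add_sub_cancel' (Fin.le_def.1 hxy)).symm
  intro g
  induction g with
  | zero => intro y hy; rwa [show y = x from Fin.ext hy]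
  | succ g ih => exact fun y hy => hS ⟨x + g, by omega⟩ y (by simp; omega) (ih _ rfl)

theorem sum_swap_add {M : Type*} [AddCommMonoid M] {s : Finset (Fin n)} {a b : Fin n}
    (ha : a ∈ s) (hb : b ∉ s) (f : Fin n → M) :
    ∑ x ∈ s, f (swap a b x) + f a = ∑ x ∈ s, f x + f b := by
  rw [← add_sum_erase s _ ha, ← add_sum_erase s f ha, swap_apply_left,
    sum_congr rfl fun x hx => by
      rw [swap_apply_of_ne_of_ne (ne_of_mem_erase hx)
        (by rintro rfl; exact hb (mem_of_mem_erase hx))]]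
  abel

theorem sum_image_swap {s : Finset (Fin n)} {a b : Fin n} (hab : (a : ℕ) + 1 = b) (ha : a ∈ s)
    (hb : b ∉ s) : ∑ i ∈ s.image (swap a b), (i : ℕ) = ∑ i ∈ s, (i : ℕ) + 1 := by
  have := sum_swap_add ha hb (fun x => (x : ℕ))
  rw [sum_image fun x _ y _ h => (swap a b).injective h]
  omega

theorem finset_induction_on_swap {P : Finset (Fin n) → Prop}
    (upper : ∀ s : Finset (Fin n), IsUpperSet (s : Set (Fin n)) → P s)
    (step : ∀ s (a b : Fin n), (a : ℕ) + 1 = b → a ∈ s → b ∉ s →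
      P (s.image (swap a b)) → P s)
    (s : Finset (Fin n)) : P s := by
  induction hN : ∑ x ∈ s, (n - x : ℕ) using Nat.strong_induction_on generalizing s with
  | _ N ih =>
    by_cases hs : IsUpperSet (s : Set (Fin n))
    · exact upper s hs
    obtain ⟨a, b, hab, ha, hb⟩ : ∃ a b : Fin n, (a : ℕ) + 1 = b ∧ a ∈ s ∧ b ∉ s := by
      by_contra! h
      exact hs (isUpperSet_of_forall_val_add_one_eq h)
    refine step s a b hab ha hb (ih _ ?_ _ rfl)
    have := sum_swap_add ha hb (fun x => n - (x : ℕ))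
    rw [sum_image fun x _ y _ h => (swap a b).injective h]
    omega

end Fin

section ShuffleSign

variable {n k m : ℕ}

theorem finSumEquivOfFinset_image_swap {s : Finset (Fin n)} {a b : Fin n}
    (hab : (a : ℕ) + 1 = b) (ha : a ∈ s) (hb : b ∉ s) (hs : #s = k) (hsc : #sᶜ = m)
    (hs' : #(s.image (swap a b)) = k) (hsc' : #(s.image (swap a b))ᶜ = m) :
    finSumEquivOfFinset hs' hsc' = (finSumEquivOfFinset hs hsc).trans (swap a b) := by
  have hmono (t : Finset (Fin n)) (ht : ¬(a ∈ t ∧ b ∈ t)) {l : ℕ} (hl : #t = l) :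
      StrictMono (swap a b ∘ t.orderEmbOfFin hl) := fun i j hij =>
    Fin.strictMonoOn_swap_of_val_add_one_eq hab (S := t) (by simpa using ht)
      (orderEmbOfFin_mem t hl i) (orderEmbOfFin_mem t hl j) ((t.orderEmbOfFin hl).strictMono hij)
  ext (i | i) : 1
  · refine (congrFun (orderEmbOfFin_unique hs' (fun i => ?_) (hmono s (by simp [hb]) hs)) i).symm
    simp
  · refine (congrFun (orderEmbOfFin_unique hsc' (fun i => ?_) (hmono sᶜ (by simp [ha]) hsc)) i).symm
    simpa using mem_compl.1 (orderEmbOfFin_mem sᶜ hsc i)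

theorem sign_finSumEquivOfFinset_image_swap_trans_symm {s t : Finset (Fin n)} {a b : Fin n}
    (hab : (a : ℕ) + 1 = b) (ha : a ∈ s) (hb : b ∉ s) (hs : #s = k) (hsc : #sᶜ = m)
    (hs' : #(s.image (swap a b)) = k) (hsc' : #(s.image (swap a b))ᶜ = m) (ht : #t = k)
    (htc : #tᶜ = m) :
    Perm.sign ((finSumEquivOfFinset hs' hsc').trans (finSumEquivOfFinset ht htc).symm)
      = -Perm.sign ((finSumEquivOfFinset hs hsc).trans (finSumEquivOfFinset ht htc).symm) := by
  have hF : (finSumEquivOfFinset hs' hsc').trans (finSumEquivOfFinset ht htc).symm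
      = ((finSumEquivOfFinset hs hsc).trans (finSumEquivOfFinset ht htc).symm).trans
        (swap ((finSumEquivOfFinset ht htc).symm a) ((finSumEquivOfFinset ht htc).symm b)) := by
    rw [finSumEquivOfFinset_image_swap hab ha hb hs hsc]
    ext x
    exact (finSumEquivOfFinset ht htc).symm.injective.map_swap _ _ _
  have hab' : a ≠ b := Fin.ne_of_lt (Fin.lt_def.2 (by omega))
  rw [hF, Perm.sign_trans, Perm.sign_swap (by simpa using hab'), neg_one_mul]

theorem sign_finSumEquivOfFinset_trans_symm {s t : Finset (Fin n)} (hs : #s = k)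
    (hsc : #sᶜ = m) (ht : #t = k) (htc : #tᶜ = m) :
    Perm.sign ((finSumEquivOfFinset hs hsc).trans (finSumEquivOfFinset ht htc).symm)
      = (-1) ^ (∑ i ∈ s, (i : ℕ) + ∑ i ∈ t, (i : ℕ)) := by
  let R (s t : Finset (Fin n)) : Prop := ∀ (hs : #s = k) (hsc : #sᶜ = m) (ht : #t = k)
    (htc : #tᶜ = m), Perm.sign ((finSumEquivOfFinset hs hsc).trans
      (finSumEquivOfFinset ht htc).symm) = (-1) ^ (∑ i ∈ s, (i : ℕ) + ∑ i ∈ t, (i : ℕ))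
  have comm (s t) (h : R t s) : R s t := fun hs hsc ht htc => by
    rw [add_comm, ← h ht htc hs hsc, ← Perm.sign_symm]
    rfl
  have step (s t) (a b : Fin n) (hab : (a : ℕ) + 1 = b) (ha : a ∈ s) (hb : b ∉ s)
      (h : R (s.image (swap a b)) t) : R s t := fun hs hsc ht htc => by
    have hs' : #(s.image (swap a b)) = k := by
      rw [card_image_of_injective _ (swap a b).injective, hs]
    have hsc' : #(s.image (swap a b))ᶜ = m := by rw [card_compl, hs', ← hs, ← card_compl, hsc]
    have := h hs' hsc' ht htc
    rw [sign_finSumEquivOfFinset_image_swap_trans_symm hab ha hb hs hsc,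
      Fin.sum_image_swap hab ha hb,
      add_right_comm, pow_succ, mul_neg_one] at this
    exact neg_inj.1 this
  have base (s t : Finset (Fin n)) (hs : IsUpperSet (s : Set (Fin n)))
      (ht : IsUpperSet (t : Set (Fin n))) : R s t := fun hs' _ ht' _ => by
    obtain rfl : s = t := (hs.total ht).elim
      (fun h => eq_of_subset_of_card_le (coe_subset.1 h) (by omega))
      (fun h => (eq_of_subset_of_card_le (coe_subset.1 h) (by omega)).symm)
    simp [← two_mul, pow_mul]
  have upper_left (s : Finset (Fin n)) (hs : IsUpperSet (s : Set (Fin n))) (t) : R s t :=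
    Fin.finset_induction_on_swap (base s · hs ·)
      (fun t a b hab ha hb h => comm _ _ (step t s a b hab ha hb (comm _ _ h))) t
  exact Fin.finset_induction_on_swap (P := fun s => ∀ t, R s t) upper_left
    (fun s a b hab ha hb h t => step s t a b hab ha hb (h t)) s t hs hsc ht htc

end ShuffleSign

section LaplaceSign

variable {R ι : Type*} [CommRing R] [Fintype ι] [DecidableEq ι] [LinearOrder ι] {k m : ℕ}
  {s : Finset ι}

/-- The sign relating the column order `e` to the row order "`sᶜ` increasing, then `s`
increasing". -/
def laplaceSign (e : Fin m ⊕ Fin k ≃ ι) (hs : #s = k) (hsc : #sᶜ = m) : ℤˣ :=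
  Perm.sign ((Equiv.sumComm _ _).trans ((finSumEquivOfFinset hs hsc).trans e.symm))

theorem det_of_unit_columns (e : Fin m ⊕ Fin k ≃ ι) (U : Matrix ι (Fin m) R) (hs : #s = k)
    (hsc : #sᶜ = m) :
    (of fun i j => Sum.elim (U i) (fun l => if i = s.orderEmbOfFin hs l then (1 : R) else 0)
      (e.symm j)).det = laplaceSign e hs hsc * (U.submatrix (sᶜ.orderEmbOfFin hsc) id).det := by
  set K : Matrix ι ι R := of fun i j =>
    Sum.elim (U i) (fun l => if i = s.orderEmbOfFin hs l then (1 : R) else 0) (e.symm j)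
  set θ := (Equiv.sumComm _ _).trans (finSumEquivOfFinset hs hsc)
  have hblocks : K.submatrix θ e = fromBlocks (U.submatrix (sᶜ.orderEmbOfFin hsc) id) 0
      (U.submatrix (s.orderEmbOfFin hs) id) 1 := by
    ext (i | i) (j | j)
    · simp [K, θ]
    · simp only [K, θ, submatrix_apply, of_apply, symm_apply_apply, trans_apply, sumComm_apply,
        Sum.swap_inl, finSumEquivOfFinset_inr, Sum.elim_inr, fromBlocks_apply₁₂, Matrix.zero_apply]
      refine if_neg fun h => mem_compl.1 (orderEmbOfFin_mem sᶜ hsc i) ?_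
      exact h ▸ orderEmbOfFin_mem s hs j
    · simp [K, θ]
    · simp [K, θ, one_apply]
  have hperm : (K.submatrix θ e).det = laplaceSign e hs hsc * K.det := by
    rw [← det_submatrix_equiv_self e K, laplaceSign, ← det_permute]
    congr 1
    ext i j
    simp [θ]
  have hsq : (laplaceSign e hs hsc : R) * laplaceSign e hs hsc = 1 := by
    rw [← Int.cast_mul, ← Units.val_mul, Int.units_mul_self, Units.val_one, Int.cast_one]
  calc K.det = laplaceSign e hs hsc * (laplaceSign e hs hsc * K.det) := by
        rw [← mul_assoc, hsq, one_mul]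
    _ = _ := by rw [← hperm, hblocks, det_fromBlocks_zero₁₂, det_one, mul_one]

theorem laplaceSign_mul_laplaceSign {n : ℕ} (e : Fin m ⊕ Fin k ≃ Fin n) {s t : Finset (Fin n)}
    (hs : #s = k) (hsc : #sᶜ = m) (ht : #t = k) (htc : #tᶜ = m) :
    laplaceSign e hs hsc * laplaceSign e ht htc = (-1) ^ (∑ i ∈ s, (i : ℕ) + ∑ i ∈ t, (i : ℕ)) := by
  rw [← sign_finSumEquivOfFinset_trans_symm hs hsc ht htc, laplaceSign, laplaceSign,
    ← Perm.sign_symm (((Equiv.sumComm _ _).trans ((finSumEquivOfFinset ht htc).trans e.symm))),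
    mul_comm, ← Perm.sign_trans, ← Perm.sign_trans_trans_symm _ (Equiv.sumComm (Fin m) (Fin k))]
  congr 1
  ext x
  simp

theorem laplaceSign_eq_neg_one_pow_mul {n : ℕ} (e : Fin m ⊕ Fin k ≃ Fin n)
    {s t : Finset (Fin n)} (hs : #s = k) (hsc : #sᶜ = m) (ht : #t = k) (htc : #tᶜ = m) :
    (laplaceSign e hs hsc : R)
      = (-1) ^ (∑ i ∈ s, (i : ℕ) + ∑ i ∈ t, (i : ℕ)) * laplaceSign e ht htc := by
  have h : laplaceSign e hs hsc
      = laplaceSign e hs hsc * laplaceSign e ht htc * laplaceSign e ht htc := by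
    rw [mul_assoc, Int.units_mul_self, mul_one]
  rw [h, laplaceSign_mul_laplaceSign]
  push_cast
  rfl

end LaplaceSign

section ProjectedFaces

variable {n d : ℕ}

theorem card_compl_of_card_eq_sub_one (hd : 1 ≤ d) (hdn : d ≤ n) {s : Finset (Fin n)}
    (hs : #s = d - 1) : #sᶜ = n - d + 1 := by
  rw [card_compl, hs, Fintype.card_fin]
  omega

theorem sum_subtype_card_eq_sum_compl {M : Type*} [AddCommMonoid M] (hd : 1 ≤ d) (hdn : d ≤ n)
    (f : {s : Finset (Fin n) // #s = n - d + 1} → M) :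
    ∑ s, f s = ∑ B : {s : Finset (Fin n) // #s = d - 1},
      f ⟨B.1ᶜ, card_compl_of_card_eq_sub_one hd hdn B.2⟩ :=
  (Fintype.sum_equiv (Equiv.subtypeEquiv (compl_involutive.toPerm _) fun s => by
    simp only [Function.Involutive.coe_toPerm, card_compl, Fintype.card_fin]
    omega) _ _ fun _ => rfl).symm

/-- The `n × (n - d + 1)` matrix with columns `u_1, u_{d+1}, …, u_n`. -/
def eigenvectorMatrix (u1 : Fin n → ℂ) (us : Fin (n - d) → Fin n → ℂ) :
    Matrix (Fin n) (Fin (n - d + 1)) ℂ :=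
  of fun i o => Option.elim (finSuccEquiv (n - d) o) (u1 i) (fun k => us k i)

def columnEquiv (e : Option (Fin (n - d)) ⊕ Fin (d - 1) ≃ Fin n) :
    Fin (n - d + 1) ⊕ Fin (d - 1) ≃ Fin n :=
  (Equiv.sumCongr (finSuccEquiv (n - d)) (Equiv.refl _)).trans e

theorem wedgeDet_eq_laplaceSign_mul_det (hd : 1 ≤ d) (hdn : d ≤ n) (u1 : Fin n → ℂ)
    (us : Fin (n - d) → Fin n → ℂ)
    (e : Option (Fin (n - d)) ⊕ Fin (d - 1) ≃ Fin n) (A : {s : Finset (Fin n) // #s = d - 1}) :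
    wedgeDet n d u1 us e A
      = laplaceSign (columnEquiv e) A.2 (card_compl_of_card_eq_sub_one hd hdn A.2) *
        ((eigenvectorMatrix u1 us).submatrix
          (A.1ᶜ.orderEmbOfFin (card_compl_of_card_eq_sub_one hd hdn A.2)) id).det := by
  rw [← det_of_unit_columns]
  unfold wedgeDet
  congr 1
  ext i j
  obtain ⟨x, rfl⟩ := e.surjective j
  rcases x with (_ | k) | l <;> simp [columnEquiv, eigenvectorMatrix]
  rfl

theorem det_submatrix_mul_eigenvectorMatrix {M : Matrix (Fin n) (Fin n) ℂ} {β : ℂ}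
    {u1 : Fin n → ℂ} {us : Fin (n - d) → Fin n → ℂ} {ζ : Fin (n - d) → ℂ}
    (hu1 : M *ᵥ u1 = β • u1) (hus : ∀ k, M *ᵥ us k = ζ k • us k) (hζ : ∏ k, ζ k = 1)
    (r : Fin (n - d + 1) → Fin n) :
    (M.submatrix r id * eigenvectorMatrix u1 us).det
      = β * ((eigenvectorMatrix u1 us).submatrix r id).det := by
  let δ : Fin (n - d + 1) → ℂ := fun o => Option.elim (finSuccEquiv (n - d) o) β ζ
  have hMU : M * eigenvectorMatrix u1 us = eigenvectorMatrix u1 us * diagonal δ := by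
    ext i o
    rw [mul_diagonal]
    cases o using Fin.cases with
    | zero =>
      simpa [eigenvectorMatrix, mul_apply, δ, mulVec, dotProduct, mul_comm] using congrFun hu1 i
    | succ k =>
      simpa [eigenvectorMatrix, mul_apply, δ, mulVec, dotProduct, mul_comm] using congrFun (hus k) i
  have hδ : ∏ o, δ o = β := by simp [δ, Fin.prod_univ_succ, hζ]
  calc (M.submatrix r id * eigenvectorMatrix u1 us).det
      = ((eigenvectorMatrix u1 us).submatrix r id * diagonal δ).det := by
        rw [show M.submatrix r id * eigenvectorMatrix u1 us
          = (M * eigenvectorMatrix u1 us).submatrix r id from rfl, hMU]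
        rfl
    _ = _ := by rw [det_mul, det_diagonal, hδ, mul_comm]

theorem dualMatrix_eq_neg_one_pow_mul_det (hd : 1 ≤ d) (hdn : d ≤ n)
    (M : Matrix (Fin n) (Fin n) ℂ)
    (A B : {s : Finset (Fin n) // #s = d - 1}) :
    dualMatrix n d M B A = (-1) ^ (∑ i ∈ A.1, (i : ℕ) + ∑ i ∈ B.1, (i : ℕ)) *
      (M.submatrix (A.1ᶜ.orderEmbOfFin (card_compl_of_card_eq_sub_one hd hdn A.2))
        (B.1ᶜ.orderEmbOfFin (card_compl_of_card_eq_sub_one hd hdn B.2))).det := by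
  rw [dualMatrix, dif_pos ⟨card_compl_of_card_eq_sub_one hd hdn A.2,
    card_compl_of_card_eq_sub_one hd hdn B.2⟩, ← det_transpose]
  simp [transpose_submatrix]

end ProjectedFaces

/-- The vector `V = (det(u_1, u_{d+1},...,u_n, e_{a_1},...,e_{a_{d-1}}))_a`
satisfies `(M_{d-1})ᵀ V = β V`, i.e. `β V_A = Σ_B (M_{d-1})_{B,A} V_B`, where `u_1` is an
eigenvector of `M_σ` for `β` and `u_{d+1},...,u_n` are eigenvectors for eigenvalues
`ζ_{d+1},...,ζ_n` with `∏ ζ_i = 1`. -/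
theorem stmt13 (n d : ℕ) (hd : 1 ≤ d) (hdn : d ≤ n)
    (M : Matrix (Fin n) (Fin n) ℂ) (β : ℝ)
    (u1 : Fin n → ℂ) (us : Fin (n - d) → Fin n → ℂ) (ζ : Fin (n - d) → ℂ)
    (hu1 : M.mulVec u1 = (β : ℂ) • u1)
    (hus : ∀ k, M.mulVec (us k) = ζ k • us k)
    (hζ : ∏ k, ζ k = 1)
    (e : (Option (Fin (n - d)) ⊕ Fin (d - 1)) ≃ Fin n) :
    ∀ A : {s : Finset (Fin n) // s.card = d - 1},
      (β : ℂ) * wedgeDet n d u1 us e A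
        = ∑ B : {s : Finset (Fin n) // s.card = d - 1},
            dualMatrix n d M B A * wedgeDet n d u1 us e B := by
  intro A
  have hc (B : {s : Finset (Fin n) // #s = d - 1}) := card_compl_of_card_eq_sub_one hd hdn B.2
  calc (β : ℂ) * wedgeDet n d u1 us e A
      = laplaceSign (columnEquiv e) A.2 (hc A) *
          (M.submatrix (A.1ᶜ.orderEmbOfFin (hc A)) id * eigenvectorMatrix u1 us).det := by
        rw [wedgeDet_eq_laplaceSign_mul_det hd hdn,
          det_submatrix_mul_eigenvectorMatrix hu1 hus hζ]
        ring
    _ = _ := by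
        rw [det_mul_eq_sum_det_submatrix_mul_det_submatrix, sum_subtype_card_eq_sum_compl hd hdn,
          mul_sum]
        refine sum_congr rfl fun B _ => ?_
        rw [dualMatrix_eq_neg_one_pow_mul_det hd hdn, wedgeDet_eq_laplaceSign_mul_det hd hdn,
          laplaceSign_eq_neg_one_pow_mul _ A.2 (hc A) B.2 (hc B), submatrix_submatrix,
          Function.comp_id, Function.id_comp]
        ring
end

section
/- Suppose E_k and R are compact subsets of R^m with λ(E_k) = λ(R) for all k, E_k ∪ translates tiles (covers with measure-disjoint pieces) R^m by a lattice Λ for every k, R + Λ is a covering of R^m, and E_k → R in Hausdorff metric. Then R + Λ is a tiling of R^m (i.e., λ-almost every point lies in exactly one translate of R) if and only if ∂E_k → ∂R in Hausdorff metric, assuming additionally λ(∂R) = 0. -/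
/-!
A point well inside `R` lies in every `Λ`-tile `E` that is Hausdorff-close to `R`: otherwise it
lies in some `E + t` with `t ≠ 0`, hence close to `R + t`, and since `R` is the closure of its
interior, `R` and `R + t` would overlap in positive measure.

If `R` tiles, this keeps `∂E_k` near `∂R` (a point of `∂E_k` has nearby points outside `E_k`,
which cannot be deep in `R`). Conversely each point of `∂R` has nearby points deep in `R`, hence in
`E_k`, and deep in some `R + t`, hence near points outside `E_k` because `E_k` and `E_k + t` are
almost disjoint; a ball being connected, it meets `∂E_k`. Compactness of `∂R` makes this uniform.

If `∂E_k → ∂R`, a ball deep in `R` meets `E_k` but not `∂E_k`, so it lies in `E_k`. A ball common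
to the interiors of `R` and `R + t` would then lie in `E_k ∩ (E_k + t)`, so these interiors are
disjoint, and `λ(∂R) = 0` finishes the argument.
-/

open MeasureTheory Filter Metric Set

section Translates

variable {G : Type*}

def IsCovering [Add G] (Λ S : Set G) : Prop :=
  ⋃ t ∈ Λ, (fun x => x + t) '' S = univ

def IsPacking [Add G] [MeasurableSpace G] (μ : Measure G) (Λ S : Set G) : Prop :=
  ∀ t ∈ Λ, ∀ t' ∈ Λ, t ≠ t' → μ ((fun x => x + t) '' S ∩ (fun x => x + t') '' S) = 0

lemma mem_image_add_right_iff [AddGroup G] {S : Set G} {t y : G} :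
    y ∈ (fun x => x + t) '' S ↔ y - t ∈ S := by
  simp [image_add_right, sub_eq_add_neg]

lemma IsCovering.exists_sub_mem [AddGroup G] {Λ S : Set G} (h : IsCovering Λ S) (y : G) :
    ∃ t ∈ Λ, y - t ∈ S := by
  simpa [← mem_image_add_right_iff] using h.symm.subset (mem_univ y)

lemma isPacking_iff [AddCommGroup G] [MeasurableSpace G] [MeasurableAdd G] {μ : Measure G}
    [μ.IsAddRightInvariant] {Λ : AddSubgroup G} {S : Set G} :
    IsPacking μ Λ S ↔ ∀ t ∈ Λ, t ≠ 0 → μ (S ∩ (fun x => x + t) '' S) = 0 := by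
  refine ⟨fun h t ht ht0 => by simpa using h 0 Λ.zero_mem t ht (Ne.symm ht0), ?_⟩
  intro h t ht t' ht' htt'
  have htranslate : (fun x => x + t) '' S ∩ (fun x => x + t') '' S =
      (fun x => x + -t) ⁻¹' (S ∩ (fun x => x + (t' - t)) '' S) := by
    ext y
    simp only [mem_inter_iff, mem_preimage, mem_image_add_right_iff]
    rw [← sub_eq_add_neg, sub_sub, add_sub_cancel]
  rw [htranslate, measure_preimage_add_right]
  exact h _ (Λ.sub_mem ht' ht) (sub_ne_zero.2 (Ne.symm htt'))

end Translates

lemma IsPreconnected.subset_interior_of_disjoint_frontier {X : Type*} [TopologicalSpace X]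
    {s t : Set X} (hs : IsPreconnected s) (hst : (s ∩ t).Nonempty)
    (hfr : Disjoint s (frontier t)) : s ⊆ interior t := by
  have hsplit : s ⊆ interior t ∪ (closure t)ᶜ := fun x hx => by
    by_cases hxt : x ∈ closure t
    · exact Or.inl (by_contra fun hxi => hfr.notMem_of_mem_left hx ⟨hxt, hxi⟩)
    · exact Or.inr hxt
  obtain ⟨x, hxs, hxt⟩ := hst
  refine hs.subset_left_of_subset_union isOpen_interior isClosed_closure.isOpen_compl
    (disjoint_compl_right.mono_left interior_subset_closure) hsplit ⟨x, hxs, ?_⟩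
  exact (hsplit hxs).resolve_right (not_not.2 (subset_closure hxt))

lemma measure_inter_ne_zero_of_isOpen {X : Type*} [TopologicalSpace X] [MeasurableSpace X]
    {μ : Measure X} [μ.IsOpenPosMeasure] {U A B : Set X} (hU : IsOpen U) (hUA : U ⊆ A)
    (hUB : (U ∩ closure (interior B)).Nonempty) : μ (A ∩ B) ≠ 0 := by
  have hne : (U ∩ interior B).Nonempty :=
    closure_nonempty_iff.1 (hUB.mono hU.inter_closure)
  exact fun h0 => (hU.inter isOpen_interior).measure_ne_zero μ hne
    (measure_mono_null (inter_subset_inter hUA interior_subset) h0)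

lemma closure_interior_image_add_right {G : Type*} [TopologicalSpace G] [AddGroup G]
    [ContinuousAdd G] (S : Set G) (t : G) :
    closure (interior ((fun x => x + t) '' S)) = (fun x => x + t) '' closure (interior S) := by
  simp only [← Homeomorph.coe_addRight, ← Homeomorph.image_interior, ← Homeomorph.image_closure]

lemma disjoint_ball_of_notMem_thickening {X : Type*} [PseudoMetricSpace X] {F : Set X} {x : X}
    {r : ℝ} (h : x ∉ thickening r F) : Disjoint (ball x r) F :=
  disjoint_left.2 fun y hy hyF => h (mem_thickening_iff.2 ⟨y, hyF, mem_ball'.1 hy⟩)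

lemma ball_subset_interior_of_disjoint_frontier {V : Type*} [NormedAddCommGroup V]
    [NormedSpace ℝ V] {S : Set V} {x : V} {r : ℝ} (hS : (ball x r ∩ S).Nonempty)
    (hfr : Disjoint (ball x r) (frontier S)) : ball x r ⊆ interior S :=
  (convex_ball x r).isPreconnected.subset_interior_of_disjoint_frontier hS hfr

section Tiles

variable {V : Type*} [NormedAddCommGroup V] [MeasurableSpace V] [BorelSpace V]
  {μ : Measure V} [μ.IsAddRightInvariant] [μ.IsOpenPosMeasure] {Λ : AddSubgroup V}
  {E R : Set V} {p q : V} {r : ℝ}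

lemma IsPacking.not_ball_subset_inter (hE : IsPacking μ Λ E) {t : V} (ht : t ∈ Λ)
    (ht0 : t ≠ 0) (hr : 0 < r) : ¬ ball p r ⊆ E ∩ (fun x => x + t) '' E := fun h =>
  (measure_ball_pos μ p hr).ne' (measure_mono_null h (isPacking_iff.1 hE t ht ht0))

lemma IsCovering.mem_of_ball_subset_interior (hE : IsCovering Λ E) (hR : IsPacking μ Λ R)
    (hRreg : R ⊆ closure (interior R)) (hER : E ⊆ thickening r R)
    (hq : ball q r ⊆ interior R) : q ∈ E := by
  obtain ⟨t, ht, hqt⟩ := hE.exists_sub_mem q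
  by_cases ht0 : t = 0
  · simpa [ht0] using hqt
  obtain ⟨w, hwR, hw⟩ := mem_thickening_iff.1 (hER hqt)
  refine absurd (isPacking_iff.1 hR t ht ht0)
    (measure_inter_ne_zero_of_isOpen isOpen_ball (hq.trans interior_subset) ⟨w + t, ?_, ?_⟩)
  · rwa [mem_ball, dist_comm, ← dist_sub_right, add_sub_cancel_right]
  · rw [closure_interior_image_add_right]
    exact mem_image_of_mem _ (hRreg hwR)

lemma IsCovering.exists_notMem_ball (hE : IsCovering Λ E) (hEpack : IsPacking μ Λ E)
    (hR : IsPacking μ Λ R) (hRreg : R ⊆ closure (interior R)) (hER : E ⊆ thickening r R)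
    (hr : 0 < r) (hp : ball p (2 * r) ⊆ interior R) {t : V} (ht : t ∈ Λ) (ht0 : t ≠ 0) :
    ∃ b ∈ ball (p + t) r, b ∉ E := by
  by_contra! hball
  refine hEpack.not_ball_subset_inter ht ht0 hr fun q hq => ⟨hball q hq, ?_⟩
  refine mem_image_add_right_iff.2 (hE.mem_of_ball_subset_interior hR hRreg hER ?_)
  refine (ball_subset_ball' ?_).trans hp
  rw [← dist_add_right _ _ t, sub_add_cancel]
  linarith [mem_ball.1 hq]

end Tiles

section Connected

variable {V : Type*} [NormedAddCommGroup V] [NormedSpace ℝ V] {E R : Set V} {q : V} {r : ℝ}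

lemma mem_of_ball_subset_interior_of_frontier_subset (hRE : R ⊆ thickening r E)
    (hfr : frontier E ⊆ thickening r (frontier R)) (hr : 0 < r)
    (hq : ball q (2 * r) ⊆ interior R) : q ∈ E := by
  obtain ⟨e, he, hqe⟩ :=
    mem_thickening_iff.1 (hRE (interior_subset (hq (mem_ball_self (by positivity)))))
  refine interior_subset (ball_subset_interior_of_disjoint_frontier ⟨e, mem_ball'.2 hqe, he⟩
    (disjoint_left.2 fun y hy hyE => ?_) (mem_ball_self hr))
  obtain ⟨w, hw, hyw⟩ := mem_thickening_iff.1 (hfr hyE)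
  refine disjoint_left.1 disjoint_interior_frontier (hq ?_) hw
  rw [mem_ball] at hy ⊢
  linarith [dist_triangle w y q, dist_comm w y]

variable [MeasurableSpace V] [BorelSpace V] {μ : Measure V} [μ.IsAddRightInvariant]
  [μ.IsOpenPosMeasure] {Λ : AddSubgroup V}

lemma IsCovering.frontier_subset_thickening_frontier (hE : IsCovering Λ E) (hEc : IsClosed E)
    (hR : IsPacking μ Λ R) (hRreg : R ⊆ closure (interior R)) {ε : ℝ}
    (hER : E ⊆ thickening (ε / 2) R) : frontier E ⊆ thickening ε (frontier R) := by
  intro x hx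
  by_contra hxR
  obtain ⟨w, hw, hxw⟩ := mem_thickening_iff.1 (hER (hEc.frontier_subset hx))
  have hε : 0 < ε := by linarith [dist_nonneg (x := x) (y := w)]
  have hball : ball x ε ⊆ interior R := ball_subset_interior_of_disjoint_frontier
    ⟨w, mem_ball'.2 (by linarith), hw⟩ (disjoint_ball_of_notMem_thickening hxR)
  obtain ⟨y, hyE, hxy⟩ :=
    mem_closure_iff.1 ((frontier_compl E ▸ frontier_subset_closure) hx) (ε / 2) (by positivity)
  refine hyE (hE.mem_of_ball_subset_interior hR hRreg hER ((ball_subset_ball' ?_).trans hball))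
  linarith [dist_comm x y]

lemma IsCovering.exists_forall_mem_thickening_frontier (hRcov : IsCovering Λ R)
    (hR : IsPacking μ Λ R) (hRreg : R ⊆ closure (interior R)) {x : V} (hx : x ∈ frontier R)
    {ε : ℝ} (hε : 0 < ε) : ∃ δ > 0, ∀ E : Set V, IsCovering Λ E → IsPacking μ Λ E →
      E ⊆ thickening δ R → x ∈ thickening ε (frontier E) := by
  obtain ⟨a, ha, hxa⟩ := mem_closure_iff.1
    (closure_minimal hRreg isClosed_closure (frontier_subset_closure hx)) ε hε
  obtain ⟨z, hzR, hxz⟩ :=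
    mem_closure_iff.1 ((frontier_compl R ▸ frontier_subset_closure) hx) (ε / 3) (by positivity)
  obtain ⟨t, ht, hzt⟩ := hRcov.exists_sub_mem z
  have ht0 : t ≠ 0 := by rintro rfl; exact hzR (by simpa using hzt)
  obtain ⟨c, hc, hzc⟩ := mem_closure_iff.1 (hRreg hzt) (ε / 3) (by positivity)
  obtain ⟨δa, hδa0, hba⟩ := isOpen_iff.1 isOpen_interior a ha
  obtain ⟨δc, hδc0, hbc⟩ := isOpen_iff.1 isOpen_interior c hc
  set δ := min δa (min (δc / 2) (ε / 3))
  have hδ : 0 < δ := by positivity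
  have hδa : δ ≤ δa := min_le_left _ _
  have hδc : 2 * δ ≤ δc := by
    linarith [min_le_right δa (min (δc / 2) (ε / 3)), min_le_left (δc / 2) (ε / 3)]
  have hδε : δ ≤ ε / 3 := (min_le_right _ _).trans (min_le_right _ _)
  refine ⟨δ, hδ, fun E hE hEpack hER => ?_⟩
  have haE : a ∈ E :=
    hE.mem_of_ball_subset_interior hR hRreg hER ((ball_subset_ball hδa).trans hba)
  obtain ⟨b, hb, hbE⟩ := hE.exists_notMem_ball hEpack hR hRreg hER hδ
    ((ball_subset_ball hδc).trans hbc) ht ht0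
  by_contra hxE
  refine hbE (interior_subset (ball_subset_interior_of_disjoint_frontier ⟨a, mem_ball.2 ?_, haE⟩
    (disjoint_ball_of_notMem_thickening hxE) (mem_ball.2 ?_)))
  · rwa [dist_comm]
  · have hct : dist (c + t) z = dist c (z - t) := by
      rw [← dist_sub_right _ _ t, add_sub_cancel_right]
    linarith [dist_triangle4 b (c + t) z x, mem_ball.1 hb, dist_comm x z, dist_comm (z - t) c]

end Connected

section Boundaries

variable {V : Type*} [NormedAddCommGroup V] [MeasurableSpace V] [BorelSpace V] {μ : Measure V}
  [μ.IsAddRightInvariant] {R : Set V}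

lemma measure_inter_image_add_right_eq_zero_of_disjoint_interior (hRbd : μ (frontier R) = 0)
    {s : V} (hdisj : Disjoint (interior R) ((fun x => x + s) '' interior R)) :
    μ (R ∩ (fun x => x + s) '' R) = 0 := by
  have hsub : R ∩ (fun x => x + s) '' R ⊆ (interior R ∩ (fun x => x + s) '' interior R) ∪
      (frontier R ∪ (fun x => x + s) '' frontier R) := by
    rintro y ⟨hy, hys⟩
    rw [mem_image_add_right_iff] at hys
    have hy' := subset_closure hy
    have hys' := subset_closure hys
    rw [closure_eq_interior_union_frontier] at hy' hys'
    simp only [mem_union, mem_inter_iff, mem_image_add_right_iff] at hy' hys' ⊢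
    tauto
  refine measure_mono_null hsub (measure_union_null ?_ (measure_union_null hRbd ?_))
  · rw [hdisj.inter_eq, measure_empty]
  · rwa [image_add_right, measure_preimage_add_right]

variable [NormedSpace ℝ V] [μ.IsOpenPosMeasure] {Λ : AddSubgroup V}

lemma isPacking_of_frontier_approximation (hRbd : μ (frontier R) = 0)
    (happrox : ∀ δ > 0, ∃ E, IsPacking μ Λ E ∧ R ⊆ thickening δ E ∧
      frontier E ⊆ thickening δ (frontier R)) : IsPacking μ Λ R := by
  refine isPacking_iff.2 fun s hs hs0 =>
    measure_inter_image_add_right_eq_zero_of_disjoint_interior hRbd (disjoint_left.2 ?_)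
  intro p hp hps
  obtain ⟨r, hr, hpr⟩ := isOpen_iff.1
    (isOpen_interior.inter (isOpenMap_add_right s _ isOpen_interior)) p ⟨hp, hps⟩
  obtain ⟨E, hE, hRE, hfr⟩ := happrox (r / 4) (by positivity)
  have hdeep : ∀ q, ball q (r / 2) ⊆ interior R → q ∈ E := fun q hq =>
    mem_of_ball_subset_interior_of_frontier_subset hRE hfr (by positivity)
      (by rwa [show 2 * (r / 4) = r / 2 by ring])
  refine hE.not_ball_subset_inter (p := p) hs hs0 (half_pos hr) fun q hq =>
    ⟨hdeep q fun w hw => (hpr ?_).1, mem_image_add_right_iff.2 (hdeep (q - s) fun w hw => ?_)⟩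
  · exact ball_subset_ball' (by linarith [mem_ball.1 hq]) hw
  · have hws : w + s ∈ ball p r := by
      refine ball_subset_ball' ?_ ((mem_ball.2 (by rwa [← sub_add_cancel q s, dist_add_right]))
        : w + s ∈ ball q (r / 2))
      linarith [mem_ball.1 hq]
    simpa using (hpr hws).2

end Boundaries

lemma IsCompact.eventually_subset_thickening {X ι : Type*} [PseudoMetricSpace X] {l : Filter ι}
    {K : Set X} {F : ι → Set X} (hK : IsCompact K)
    (h : ∀ x ∈ K, ∀ ε > 0, ∀ᶠ i in l, x ∈ thickening ε (F i)) {ε : ℝ} (hε : 0 < ε) :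
    ∀ᶠ i in l, K ⊆ thickening ε (F i) := by
  obtain ⟨T, hTK, hKT⟩ :=
    hK.elim_nhds_subcover (fun x => ball x (ε / 2)) fun x _ => ball_mem_nhds x (half_pos hε)
  filter_upwards [T.eventually_all.2 fun x hx => h x (hTK x hx) (ε / 2) (half_pos hε)]
    with i hi y hy
  obtain ⟨x, hxT, hyx⟩ := mem_iUnion₂.1 (hKT hy)
  simpa using thickening_thickening_subset (ε / 2) (ε / 2) (F i)
    (mem_thickening_iff.2 ⟨x, hi x hxT, mem_ball.1 hyx⟩)

lemma tendsto_hausdorffDist_nhds_zero_iff {X ι : Type*} [PseudoMetricSpace X] {l : Filter ι}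
    {A : ι → Set X} {B : Set X} (hfin : ∀ i, hausdorffEDist (A i) B ≠ ⊤) :
    Tendsto (fun i => hausdorffDist (A i) B) l (nhds 0) ↔
      ∀ δ > 0, ∀ᶠ i in l, A i ⊆ thickening δ B ∧ B ⊆ thickening δ (A i) := by
  simp only [Metric.tendsto_nhds, Real.dist_eq, sub_zero, abs_of_nonneg hausdorffDist_nonneg]
  refine ⟨fun h δ hδ => (h δ hδ).mono fun i hi => ⟨fun x hx => ?_, fun y hy => ?_⟩,
    fun h δ hδ => (h (δ / 2) (half_pos hδ)).mono fun i hi => ?_⟩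
  · exact mem_thickening_iff.2 (exists_dist_lt_of_hausdorffDist_lt hx hi (hfin i))
  · obtain ⟨x, hx, hyx⟩ := exists_dist_lt_of_hausdorffDist_lt' hy hi (hfin i)
    exact mem_thickening_iff.2 ⟨x, hx, by rwa [dist_comm]⟩
  refine (hausdorffDist_le_of_mem_dist (half_pos hδ).le (fun x hx => ?_) fun y hy => ?_).trans_lt
    (half_lt_self hδ)
  · obtain ⟨y, hy, hxy⟩ := mem_thickening_iff.1 (hi.1 hx)
    exact ⟨y, hy, hxy.le⟩
  · obtain ⟨x, hx, hyx⟩ := mem_thickening_iff.1 (hi.2 hy)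
    exact ⟨x, hx, hyx.le⟩

lemma hausdorffEDist_frontier_ne_top {V : Type*} [NormedAddCommGroup V] [NormedSpace ℝ V]
    {A B : Set V} (hA : IsCompact A) (hA' : A.Nonempty) (hB : IsCompact B) (hB' : B.Nonempty) :
    hausdorffEDist (frontier A) (frontier B) ≠ ⊤ := by
  rcases subsingleton_or_nontrivial V with hV | hV
  · simp [hA'.eq_univ, hB'.eq_univ]
  exact hausdorffEDist_ne_top_of_nonempty_of_bounded
    (nonempty_frontier_iff.2 ⟨hA', hA.ne_univ⟩) (nonempty_frontier_iff.2 ⟨hB', hB.ne_univ⟩)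
    (hA.isBounded.subset hA.isClosed.frontier_subset)
    (hB.isBounded.subset hB.isClosed.frontier_subset)

lemma coe_span_int_range_eq {ι M : Type*} [Fintype ι] [AddCommGroup M] [Module ℝ M]
    (v : ι → M) :
    (Submodule.span ℤ (range v) : Set M) = {t | ∃ c : ι → ℤ, t = ∑ i, (c i : ℝ) • v i} := by
  ext t
  simp only [SetLike.mem_coe, Submodule.mem_span_range_iff_exists_fun, mem_ofPred_eq,
    Int.cast_smul_eq_zsmul, eq_comm]

theorem stmt16_general (m : ℕ) (b : Module.Basis (Fin m) ℝ (Fin m → ℝ)) (Λ : Set (Fin m → ℝ))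
    (hΛ : Λ = {t | ∃ c : Fin m → ℤ, t = ∑ i, (c i : ℝ) • b i})
    (R : Set (Fin m → ℝ)) (E : ℕ → Set (Fin m → ℝ))
    (hR : IsCompact R) (hRne : R.Nonempty)
    (hRint : R = closure (interior R))
    (hRbd : volume (frontier R) = 0)
    (hE : ∀ k, IsCompact (E k)) (hEne : ∀ k, (E k).Nonempty)
    (hEcover : ∀ k, ⋃ t ∈ Λ, (fun x => x + t) '' (E k) = Set.univ)
    (hEdisj : ∀ k, ∀ t ∈ Λ, ∀ t' ∈ Λ, t ≠ t' →
      volume (((fun x => x + t) '' E k) ∩ ((fun x => x + t') '' E k)) = 0)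
    (hRcover : ⋃ t ∈ Λ, (fun x => x + t) '' R = Set.univ)
    (hconv : Tendsto (fun k => Metric.hausdorffDist (E k) R) atTop (nhds 0)) :
    (∀ t ∈ Λ, ∀ t' ∈ Λ, t ≠ t' →
        volume (((fun x => x + t) '' R) ∩ ((fun x => x + t') '' R)) = 0)
      ↔ Tendsto (fun k => Metric.hausdorffDist (frontier (E k)) (frontier R))
          atTop (nhds 0) := by
  obtain ⟨Λ, rfl⟩ : ∃ L : AddSubgroup (Fin m → ℝ), Λ = L :=
    ⟨(Submodule.span ℤ (range b)).toAddSubgroup, hΛ.trans (coe_span_int_range_eq b).symm⟩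
  have hEconv := (tendsto_hausdorffDist_nhds_zero_iff fun k =>
    hausdorffEDist_ne_top_of_nonempty_of_bounded (hEne k) hRne (hE k).isBounded
      hR.isBounded).1 hconv
  rw [tendsto_hausdorffDist_nhds_zero_iff fun k =>
    hausdorffEDist_frontier_ne_top (hE k) (hEne k) hR hRne]
  change IsPacking volume Λ R ↔ _
  constructor
  · intro hRpack ε hε
    have hpoint : ∀ x ∈ frontier R, ∀ ε > 0, ∀ᶠ k in atTop,
        x ∈ thickening ε (frontier (E k)) := fun x hx ε hε => by
      obtain ⟨δ, hδ, hxδ⟩ := IsCovering.exists_forall_mem_thickening_frontier hRcover hRpack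
        hRint.subset hx hε
      exact (hEconv δ hδ).mono fun k hk => hxδ _ (hEcover k) (hEdisj k) hk.1
    have hfrR : IsCompact (frontier R) :=
      hR.of_isClosed_subset isClosed_frontier hR.isClosed.frontier_subset
    filter_upwards [hEconv (ε / 2) (half_pos hε), hfrR.eventually_subset_thickening hpoint hε]
      with k hk hfrRk
    exact ⟨IsCovering.frontier_subset_thickening_frontier (hEcover k) (hE k).isClosed hRpack
      hRint.subset hk.1, hfrRk⟩
  · intro hfr
    refine isPacking_of_frontier_approximation hRbd fun δ hδ => ?_
    obtain ⟨k, hk, hk'⟩ := ((hEconv δ hδ).and (hfr δ hδ)).exists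
    exact ⟨E k, hEdisj k, hk.2, hk'.1⟩

/-- Suppose compact sets `E_k` all have the same measure as `R`, each
`E_k` tiles `ℝᵐ` by the full-rank lattice `Λ`, `R + Λ` covers `ℝᵐ`, `E_k → R` in
Hausdorff metric, `R` is compact, equal to the closure of its interior, with
`λ(∂R) = 0`. Then `R + Λ` is a tiling (distinct translates intersect in measure zero)
if and only if `∂E_k → ∂R` in Hausdorff metric. -/
theorem stmt16 (m : ℕ) (b : Module.Basis (Fin m) ℝ (Fin m → ℝ)) (Λ : Set (Fin m → ℝ))
    (hΛ : Λ = {t | ∃ c : Fin m → ℤ, t = ∑ i, (c i : ℝ) • b i})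
    (R : Set (Fin m → ℝ)) (E : ℕ → Set (Fin m → ℝ))
    (hR : IsCompact R) (hRne : R.Nonempty)
    (hRint : R = closure (interior R))
    (hRbd : volume (frontier R) = 0)
    (hE : ∀ k, IsCompact (E k)) (hEne : ∀ k, (E k).Nonempty)
    (hvol : ∀ k, volume (E k) = volume R)
    (hEcover : ∀ k, ⋃ t ∈ Λ, (fun x => x + t) '' (E k) = Set.univ)
    (hEdisj : ∀ k, ∀ t ∈ Λ, ∀ t' ∈ Λ, t ≠ t' →
      volume (((fun x => x + t) '' E k) ∩ ((fun x => x + t') '' E k)) = 0)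
    (hRcover : ⋃ t ∈ Λ, (fun x => x + t) '' R = Set.univ)
    (hconv : Tendsto (fun k => Metric.hausdorffDist (E k) R) atTop (nhds 0)) :
    (∀ t ∈ Λ, ∀ t' ∈ Λ, t ≠ t' →
        volume (((fun x => x + t) '' R) ∩ ((fun x => x + t') '' R)) = 0)
      ↔ Tendsto (fun k => Metric.hausdorffDist (frontier (E k)) (frontier R))
          atTop (nhds 0) :=
  stmt16_general m b Λ hΛ R E hR hRne hRint hRbd hE hEne hEcover hEdisj hRcover hconv
end
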